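/- For every k in the torus, 4 ∫_{T} R(k,k') dk' = 8 sin²(πk)[1 + 2cos²(πk)], i.e. the total scattering rate equals the damping function β̂(k). -/

import Mathlib

/-!
As a function of `k'`, `R(k, k')` is a trigonometric polynomial of degree two whose constant
term is `β̂(k) / 4`; the harmonics `cos (2πk')` and `cos (4πk')` integrate to zero over a period.
-/

open Real MeasureTheory

/-- The scattering kernel `R(k,k')`. -/
noncomputable def Rker (k k' : ℝ) : ℝ :=
  8 * Real.sin (π * k) ^ 2 * Real.sin (π * k') ^ 2 *
    (Real.sin (π * (k + k')) ^ 2 + Real.sin (π * (k - k')) ^ 2)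

/-- The damping function `β̂(k)`. -/
noncomputable def betaHat (k : ℝ) : ℝ :=
  8 * Real.sin (π * k) ^ 2 * (1 + 2 * Real.cos (π * k) ^ 2)

theorem integral_cos_int_mul_two_pi_mul_unit_interval (a : ℝ) {n : ℤ} (hn : n ≠ 0) :
    ∫ x in a..a + 1, cos (n * (2 * π) * x) = 0 := by
  have hc : (n : ℝ) * (2 * π) ≠ 0 := by positivity
  rw [intervalIntegral.integral_comp_mul_left cos hc, integral_cos, mul_add, mul_one,
    sin_add_int_mul_two_pi, sub_self, smul_zero]

theorem Rker_eq_betaHat_add_cos (k x : ℝ) :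
    Rker k x = betaHat k / 4 - 2 * sin (2 * π * k) ^ 2 * cos (2 * π * x)
      + 2 * sin (π * k) ^ 2 * cos (2 * π * k) * cos (4 * π * x) := by
  rw [Rker, betaHat, show 4 * π * x = 2 * (2 * (π * x)) by ring, mul_assoc 2 π k,
    mul_assoc 2 π x, mul_add π k x, mul_sub π k x, sin_add, sin_sub]
  simp only [sin_two_mul, cos_two_mul]
  have hk := sin_sq_add_cos_sq (π * k)
  have hx := sin_sq_add_cos_sq (π * x)
  generalize sin (π * k) = S, cos (π * k) = C, sin (π * x) = s, cos (π * x) = c at *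
  grind

/-- The total scattering rate equals the damping function:
`4 ∫_T R(k,k') dk' = β̂(k)`, where `T = [-1/2,1/2]`. -/
theorem stmt2 (k : ℝ) :
    4 * ∫ k' in Set.Icc (-(1/2) : ℝ) (1/2), Rker k k' = betaHat k := by
  have hcos (n : ℤ) (hn : n ≠ 0) : ∫ x in (-(1/2) : ℝ)..(1/2), cos (n * (2 * π) * x) = 0 := by
    have h := integral_cos_int_mul_two_pi_mul_unit_interval (-(1/2)) hn
    rwa [show -(1/2 : ℝ) + 1 = 1/2 by norm_num] at h
  have hcos₁ : ∫ x in (-(1/2) : ℝ)..(1/2), cos (2 * π * x) = 0 := by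
    simpa using hcos 1 one_ne_zero
  have hcos₂ : ∫ x in (-(1/2) : ℝ)..(1/2), cos (4 * π * x) = 0 := by
    convert hcos 2 two_ne_zero using 4; push_cast; ring
  rw [integral_Icc_eq_integral_Ioc, ← intervalIntegral.integral_of_le (by norm_num)]
  simp_rw [Rker_eq_betaHat_add_cos]
  rw [intervalIntegral.integral_add, intervalIntegral.integral_sub]
  · rw [intervalIntegral.integral_const_mul, intervalIntegral.integral_const_mul, hcos₁, hcos₂,
      intervalIntegral.integral_const, smul_eq_mul]
    ring
  all_goals exact Continuous.intervalIntegrable (by fun_prop) _ _
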